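/- arXiv:1401.1534 — 4 statements merged into one kernel-verified Lean document; each statement's English description precedes it below -/
import Mathlib

section
/- Let p > 2 and φ(x) = sin(x) on Ω = (0,π). There exists a constant C > 0 such that for every v ∈ C¹([0,π]) with v(0) = v(π) = 0, one has C·|∫₀^π v(x) sin(x) dx|^p ≤ ∫₀^π |v'(x)|^p sin(x) dx. -/
/-!
Since `v 0 = 0`, the fundamental theorem of calculus gives `|v| ≤ ∫₀^π |v'|` pointwise, hence
`|∫ v sin| ≤ 2 ∫₀^π |v'|`. Writing `|v'| = (|v'| sin^(1/p)) · sin^(-1/p)`, Hölder's inequality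
bounds `(∫ |v'|)^p` by `K^(p-1) ∫ |v'|^p sin` with `K = ∫₀^π sin^(-1/(p-1))`. As
`sin x ≥ (2/π) min(x, π - x)`, `K` is finite precisely because `1/(p-1) < 1`, i.e. `p > 2`.
-/

open MeasureTheory Real intervalIntegral Set

section WeightedHolder

variable {α : Type*} [MeasurableSpace α] {μ : Measure α}

theorem memLp_ofReal_of_integrable_rpow {p : ℝ} (hp : 0 < p) {f : α → ℝ}
    (hf_meas : AEStronglyMeasurable f μ) (hf : 0 ≤ᵐ[μ] f)
    (hint : Integrable (fun x => f x ^ p) μ) : MemLp f (ENNReal.ofReal p) μ := by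
  rw [← integrable_norm_rpow_iff hf_meas (by simpa using hp) ENNReal.ofReal_ne_top,
    ENNReal.toReal_ofReal hp.le]
  refine hint.congr ?_
  filter_upwards [hf] with x hx
  rw [norm_of_nonneg hx]

theorem rpow_integral_le_integral_weight_rpow_mul {p : ℝ} (hp : 1 < p) {f w : α → ℝ}
    (hf : 0 ≤ᵐ[μ] f) (hw : ∀ᵐ x ∂μ, 0 < w x)
    (hf_meas : AEStronglyMeasurable f μ) (hw_meas : AEStronglyMeasurable w μ)
    (hfw : Integrable (fun x => f x ^ p * w x) μ)
    (hw_int : Integrable (fun x => w x ^ (-(p - 1)⁻¹)) μ) :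
    (∫ x, f x ∂μ) ^ p ≤ (∫ x, w x ^ (-(p - 1)⁻¹) ∂μ) ^ (p - 1) * ∫ x, f x ^ p * w x ∂μ := by
  have hp0 : 0 < p := by linarith
  have hpq : p.HolderConjugate p.conjExponent := .conjExponent hp
  set q := p.conjExponent
  have hq : q / p = (p - 1)⁻¹ := by simp only [q, Real.conjExponent]; field_simp
  set F := fun x => f x * w x ^ p⁻¹
  set G := fun x => w x ^ (-p⁻¹)
  have hF0 : 0 ≤ᵐ[μ] F := by
    filter_upwards [hf, hw] with x hfx hwx using mul_nonneg hfx (rpow_nonneg hwx.le _)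
  have hG0 : 0 ≤ᵐ[μ] G := by
    filter_upwards [hw] with x hwx using rpow_nonneg hwx.le _
  have hFG : (fun x => F x * G x) =ᵐ[μ] f := by
    filter_upwards [hw] with x hwx
    simp only [F, G, mul_assoc, ← rpow_add hwx, add_neg_cancel, rpow_zero, mul_one]
  have hFp : (fun x => F x ^ p) =ᵐ[μ] fun x => f x ^ p * w x := by
    filter_upwards [hf, hw] with x hfx hwx
    rw [mul_rpow hfx (rpow_nonneg hwx.le _), ← rpow_mul hwx.le, inv_mul_cancel₀ hp0.ne', rpow_one]
  have hGq : (fun x => G x ^ q) =ᵐ[μ] fun x => w x ^ (-(p - 1)⁻¹) := by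
    filter_upwards [hw] with x hwx
    rw [← rpow_mul hwx.le, neg_mul, inv_mul_eq_div, hq]
  have hG_meas : AEStronglyMeasurable G μ :=
    (hw_meas.aemeasurable.pow_const _).aestronglyMeasurable
  have holder := integral_mul_le_Lp_mul_Lq_of_nonneg hpq hF0 hG0
    (memLp_ofReal_of_integrable_rpow hp0
      (hf_meas.mul (hw_meas.aemeasurable.pow_const _).aestronglyMeasurable) hF0
      (hfw.congr hFp.symm))
    (memLp_ofReal_of_integrable_rpow hpq.symm.pos hG_meas hG0 (hw_int.congr hGq.symm))
  rw [integral_congr_ae hFG, integral_congr_ae hFp, integral_congr_ae hGq] at holder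
  have hI : 0 ≤ ∫ x, f x ^ p * w x ∂μ := integral_nonneg_of_ae <| by
    filter_upwards [hf, hw] with x hfx hwx using mul_nonneg (rpow_nonneg hfx _) hwx.le
  have hK : 0 ≤ ∫ x, w x ^ (-(p - 1)⁻¹) ∂μ := integral_nonneg_of_ae <| by
    filter_upwards [hw] with x hwx using rpow_nonneg hwx.le _
  calc (∫ x, f x ∂μ) ^ p
      ≤ ((∫ x, f x ^ p * w x ∂μ) ^ (1 / p) * (∫ x, w x ^ (-(p - 1)⁻¹) ∂μ) ^ (1 / q)) ^ p :=
        rpow_le_rpow (integral_nonneg_of_ae hf) holder hp0.le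
    _ = (∫ x, w x ^ (-(p - 1)⁻¹) ∂μ) ^ (p / q) * ∫ x, f x ^ p * w x ∂μ := by
        rw [mul_rpow (rpow_nonneg hI _) (rpow_nonneg hK _), ← rpow_mul hI, ← rpow_mul hK,
          one_div_mul_cancel hp0.ne', rpow_one, mul_comm, one_div_mul_eq_div]
    _ = _ := by
        rw [div_eq_of_eq_mul hpq.symm.ne_zero hpq.sub_one_mul_conj.symm]

end WeightedHolder

theorem mul_min_le_sin {x : ℝ} (h0 : 0 ≤ x) (hπ : x ≤ π) : 2 / π * min x (π - x) ≤ sin x := by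
  rcases le_total x (π / 2) with hx | hx
  · exact (mul_le_mul_of_nonneg_left (min_le_left _ _) (by positivity)).trans (mul_le_sin h0 hx)
  · calc 2 / π * min x (π - x) ≤ 2 / π * (π - x) :=
          mul_le_mul_of_nonneg_left (min_le_right _ _) (by positivity)
      _ ≤ sin (π - x) := mul_le_sin (by linarith) (by linarith)
      _ = sin x := sin_pi_sub x

theorem intervalIntegrable_sin_rpow {r : ℝ} (hr : -1 < r) :
    IntervalIntegrable (fun x => sin x ^ r) volume 0 π := by
  rcases le_or_gt 0 r with hr0 | hr0
  · exact (continuous_sin.rpow_const fun _ => Or.inr hr0).intervalIntegrable _ _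
  have hx : IntervalIntegrable (fun x : ℝ => x ^ r) volume 0 π := intervalIntegrable_rpow' hr
  have hπx : IntervalIntegrable (fun x : ℝ => (π - x) ^ r) volume 0 π := by
    simpa using (hx.comp_sub_left π).symm
  refine ((hx.add hπx).const_mul ((2 / π) ^ r)).mono_fun'
    (continuous_sin.measurable.pow_const r).aestronglyMeasurable ?_
  rw [uIoc_of_le pi_pos.le, ← Measure.restrict_congr_set Ioo_ae_eq_Ioc]
  filter_upwards [ae_restrict_mem measurableSet_Ioo] with x ⟨hx0, hxπ⟩
  have hmin : 0 < min x (π - x) := lt_min hx0 (by linarith)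
  have hmin_rpow : min x (π - x) ^ r ≤ x ^ r + (π - x) ^ r := by
    have := rpow_nonneg hx0.le r
    have := rpow_nonneg (sub_pos.2 hxπ).le r
    rcases min_choice x (π - x) with h | h <;> rw [h] <;> linarith
  calc ‖sin x ^ r‖ = sin x ^ r :=
        norm_of_nonneg (rpow_nonneg (sin_pos_of_pos_of_lt_pi hx0 hxπ).le _)
    _ ≤ (2 / π * min x (π - x)) ^ r :=
        rpow_le_rpow_of_nonpos (by positivity) (mul_min_le_sin hx0.le hxπ.le) hr0.le
    _ ≤ (2 / π) ^ r * (x ^ r + (π - x) ^ r) := by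
        rw [mul_rpow (by positivity) hmin.le]
        exact mul_le_mul_of_nonneg_left hmin_rpow (by positivity)

theorem intervalIntegrable_sin_rpow_neg_inv_sub_one {p : ℝ} (hp : 2 < p) :
    IntervalIntegrable (fun x => sin x ^ (-(p - 1)⁻¹)) volume 0 π :=
  intervalIntegrable_sin_rpow (neg_lt_neg (inv_lt_one_of_one_lt₀ (by linarith)))

theorem abs_le_integral_abs_derivWithin {v : ℝ → ℝ} {a b x : ℝ} (hv : ContDiffOn ℝ 1 v (Icc a b))
    (ha : v a = 0) (hx : x ∈ Icc a b) :
    |v x| ≤ ∫ t in a..b, |derivWithin v (Icc a b) t| := by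
  rcases (hx.1.trans hx.2).eq_or_lt with rfl | hab
  · rw [le_antisymm hx.2 hx.1, ha, abs_zero, integral_same]
  have hint : IntervalIntegrable (fun t => |derivWithin v (Icc a b) t|) volume a b :=
    ((hv.continuousOn_derivWithin (uniqueDiffOn_Icc hab) le_rfl).abs.mono
      (uIcc_of_le hab.le).subset).intervalIntegrable
  calc |v x| = ‖v x - v a‖ := by rw [ha, sub_zero, norm_eq_abs]
    _ ≤ ∫ t in a..x, |derivWithin v (Icc a b) t| := by
        refine norm_sub_le_integral_of_norm_deriv_le_of_le hx.1
          (hv.continuousOn.mono (Icc_subset_Icc_right hx.2))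
          ((hv.differentiableOn one_ne_zero).mono (Ioo_subset_Icc_self.trans
            (Icc_subset_Icc_right hx.2))) (ae_of_all _ fun t ht => ?_)
          (hint.mono_set (uIcc_subset_uIcc_left (uIcc_of_le hab.le ▸ hx)))
        rw [derivWithin_of_mem_nhds (Icc_mem_nhds ht.1 (ht.2.trans_le hx.2)), norm_eq_abs]
    _ ≤ ∫ t in a..b, |derivWithin v (Icc a b) t| :=
        integral_mono_interval le_rfl hx.1 hx.2 (ae_of_all _ fun _ => abs_nonneg _) hint

theorem abs_integral_mul_sin_le {v : ℝ → ℝ} (hv : ContDiffOn ℝ 1 v (Icc 0 π)) (h0 : v 0 = 0) :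
    |∫ x in 0..π, v x * sin x| ≤ 2 * ∫ x in 0..π, |derivWithin v (Icc 0 π) x| := by
  set A := ∫ x in 0..π, |derivWithin v (Icc 0 π) x|
  have hcont : ContinuousOn (fun x => |v x * sin x|) (uIcc 0 π) := by
    rw [uIcc_of_le pi_pos.le]; exact (hv.continuousOn.mul continuous_sin.continuousOn).abs
  calc |∫ x in 0..π, v x * sin x| ≤ ∫ x in 0..π, |v x * sin x| :=
        abs_integral_le_integral_abs pi_pos.le
    _ ≤ ∫ x in 0..π, A * sin x := by
        refine integral_mono_on pi_pos.le hcont.intervalIntegrable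
          ((continuous_sin.const_mul A).intervalIntegrable _ _) fun x hx => ?_
        have hsin := sin_nonneg_of_nonneg_of_le_pi hx.1 hx.2
        rw [abs_mul, abs_of_nonneg hsin]
        exact mul_le_mul_of_nonneg_right (abs_le_integral_abs_derivWithin hv h0 hx) hsin
    _ = 2 * A := by rw [intervalIntegral.integral_const_mul, integral_sin, cos_zero, cos_pi]; ring

theorem rpow_integral_abs_le_mul_integral_abs_rpow_mul_sin {p : ℝ} (hp : 2 < p) {g : ℝ → ℝ}
    (hg : ContinuousOn g (Icc 0 π)) :
    (∫ x in 0..π, |g x|) ^ p ≤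
      (∫ x in 0..π, sin x ^ (-(p - 1)⁻¹)) ^ (p - 1) * ∫ x in 0..π, |g x| ^ p * sin x := by
  simp only [integral_of_le pi_pos.le, integral_Ioc_eq_integral_Ioo]
  have hsin : ∀ᵐ x ∂volume.restrict (Ioo 0 π), 0 < sin x := by
    filter_upwards [ae_restrict_mem measurableSet_Ioo] with x hx
    exact sin_pos_of_pos_of_lt_pi hx.1 hx.2
  refine rpow_integral_le_integral_weight_rpow_mul (by linarith)
    (ae_of_all _ fun _ => abs_nonneg _) hsin
    ((hg.abs.mono Ioo_subset_Icc_self).aestronglyMeasurable measurableSet_Ioo)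
    continuous_sin.aestronglyMeasurable ?_
    ((intervalIntegrable_iff_integrableOn_Ioo_of_le pi_pos.le).1
      (intervalIntegrable_sin_rpow_neg_inv_sub_one hp))
  exact (((hg.abs.rpow_const fun _ _ => Or.inr (by linarith)).mul
    continuous_sin.continuousOn).integrableOn_Icc).mono_set Ioo_subset_Icc_self

/-- Weighted Poincaré inequality with weight `sin x` on `(0, π)`, for `p > 2`:
there is `C > 0` such that for all `C¹` functions `v` on `[0, π]` vanishing at the endpoints,
`C * |∫₀^π v sin|^p ≤ ∫₀^π |v'|^p sin`. -/
theorem stmt_1 (p : ℝ) (hp : 2 < p) :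
    ∃ C > (0 : ℝ), ∀ v : ℝ → ℝ, ContDiffOn ℝ 1 v (Set.Icc 0 Real.pi) →
      v 0 = 0 → v Real.pi = 0 →
      C * |∫ x in (0:ℝ)..Real.pi, v x * Real.sin x| ^ p
        ≤ ∫ x in (0:ℝ)..Real.pi, |derivWithin v (Set.Icc 0 Real.pi) x| ^ p * Real.sin x := by
  set K := ∫ x in 0..π, sin x ^ (-(p - 1)⁻¹)
  have hK : 0 < K :=
    intervalIntegral_pos_of_pos_on (intervalIntegrable_sin_rpow_neg_inv_sub_one hp)
      (fun x hx => rpow_pos_of_pos (sin_pos_of_pos_of_lt_pi hx.1 hx.2) _) pi_pos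
  refine ⟨(2 ^ p * K ^ (p - 1))⁻¹, by positivity, fun v hv h0 _ => ?_⟩
  set v' := derivWithin v (Icc 0 π)
  have hA : 0 ≤ ∫ x in 0..π, |v' x| := integral_nonneg pi_pos.le fun _ _ => abs_nonneg _
  rw [inv_mul_le_iff₀ (by positivity)]
  calc |∫ x in 0..π, v x * sin x| ^ p ≤ (2 * ∫ x in 0..π, |v' x|) ^ p :=
        rpow_le_rpow (abs_nonneg _) (abs_integral_mul_sin_le hv h0) (by linarith)
    _ = 2 ^ p * (∫ x in 0..π, |v' x|) ^ p := mul_rpow zero_le_two hA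
    _ ≤ 2 ^ p * (K ^ (p - 1) * ∫ x in 0..π, |v' x| ^ p * sin x) :=
        mul_le_mul_of_nonneg_left (rpow_integral_abs_le_mul_integral_abs_rpow_mul_sin hp
          (hv.continuousOn_derivWithin (uniqueDiffOn_Icc pi_pos) le_rfl)) (by positivity)
    _ = _ := by ring
end

section
/- There is no constant C > 0 such that C·(∫₀^π v(x) sin(x) dx)² ≤ ∫₀^π (v'(x))² sin(x) dx holds for all v in W₀^{1,2}((0,π)). Concretely, for ε ∈ (0,π/4), the functions v_ε defined by v_ε(x) = 0 on [0,ε²] ∪ [π-ε², π], v_ε(x) = log(x/ε²) on [ε², ε], v_ε(x) = log(1/ε) on [ε, π-ε], v_ε(x) = log((π-x)/ε²) on [π-ε², π-ε] (extended symmetrically) satisfy (∫₀^π v_ε sin dx)² / ∫₀^π (v_ε')² sin dx → ∞ as ε → 0⁺. -/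
open MeasureTheory Real Filter intervalIntegral

/-- The piecewise log-plateau function `v_ε` on `[0, π]`. -/
noncomputable def vfam (ε x : ℝ) : ℝ :=
  if x ≤ ε ^ 2 then 0
  else if x ≤ ε then Real.log (x / ε ^ 2)
  else if x ≤ Real.pi - ε then Real.log (1 / ε)
  else if x ≤ Real.pi - ε ^ 2 then Real.log ((Real.pi - x) / ε ^ 2)
  else 0

/-- The (a.e.) derivative of `vfam ε`. -/
noncomputable def vfam' (ε x : ℝ) : ℝ :=
  if ε ^ 2 < x ∧ x < ε then 1 / x
  else if Real.pi - ε < x ∧ x < Real.pi - ε ^ 2 then 1 / (x - Real.pi)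
  else 0

/-!
Write `L = -log ε`. The numerator is at least `(∫_ε^{π-ε} L sin)² = (2 L cos ε)² ≥ L²`, since
`v_ε = L` on the plateau. On the two ramps `|v_ε'| = 1/x` resp. `1/(π-x)`, and `sin x` is at most
`x` resp. `π - x` there, so `(v_ε')² sin ≤ |v_ε'|` and the denominator is at most the total variation
`2 L` of `v_ε`. Hence the ratio is at least `L / 2 → ∞`.
-/

open Set

lemma IntervalIntegrable.indicator_Ioo {f : ℝ → ℝ} {c d : ℝ}
    (hf : IntervalIntegrable f volume c d) (a b : ℝ) :
    IntervalIntegrable ((Ioo c d).indicator f) volume a b :=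
  ((hf.def'.mono_set (Ioo_subset_Ioc_self.trans Ioc_subset_uIoc)).integrable_indicator
    measurableSet_Ioo).intervalIntegrable

lemma intervalIntegral_indicator_Ioo {f : ℝ → ℝ} {a b c d : ℝ}
    (hac : a ≤ c) (hcd : c ≤ d) (hdb : d ≤ b) :
    ∫ x in a..b, (Ioo c d).indicator f x = ∫ x in c..d, f x := by
  rw [integral_of_le (hac.trans (hcd.trans hdb)), integral_of_le hcd, setIntegral_indicator
    measurableSet_Ioo, inter_eq_right.mpr (Ioo_subset_Ioc_self.trans (Ioc_subset_Ioc hac hdb)),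
    integral_Ioc_eq_integral_Ioo]

lemma log_div_sq_self (ε : ℝ) : log (ε / ε ^ 2) = -log ε := by
  rw [sq, div_self_mul_self', log_inv]

lemma one_le_two_mul_cos {x : ℝ} (hx : x ^ 2 ≤ 1) : 1 ≤ 2 * cos x := by
  linarith [one_sub_sq_div_two_le_cos (x := x)]

lemma measurable_vfam (ε : ℝ) : Measurable (vfam ε) := by
  unfold vfam
  refine Measurable.ite measurableSet_Iic (by fun_prop) ?_
  refine Measurable.ite measurableSet_Iic (measurable_log.comp (by fun_prop)) ?_
  refine Measurable.ite measurableSet_Iic (by fun_prop) ?_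
  exact Measurable.ite measurableSet_Iic (measurable_log.comp (by fun_prop)) (by fun_prop)

lemma measurable_vfam' (ε : ℝ) : Measurable (vfam' ε) := by
  unfold vfam'
  exact Measurable.ite measurableSet_Ioo (by fun_prop)
    (Measurable.ite measurableSet_Ioo (by fun_prop) (by fun_prop))

lemma abs_vfam'_mul_abs_sin_le_one (ε x : ℝ) : |vfam' ε x| * |sin x| ≤ 1 := by
  have key : ∀ y ≠ 0, |sin x| ≤ |y| → |1 / y| * |sin x| ≤ 1 := fun y hy h => by
    rwa [abs_div, abs_one, div_mul_eq_mul_div, one_mul, div_le_one (abs_pos.mpr hy)]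
  unfold vfam'
  split_ifs with h₁ h₂
  · exact key x (by nlinarith [h₁.1]) abs_sin_le_abs
  · exact key (x - π) (by linarith [h₂.2, sq_nonneg ε])
      (by rw [← sin_pi_sub, abs_sub_comm]; exact abs_sin_le_abs)
  · simp

lemma norm_sq_vfam'_mul_sin_le (ε x : ℝ) : ‖vfam' ε x ^ 2 * sin x‖ ≤ |vfam' ε x| := by
  rw [norm_mul, norm_pow, Real.norm_eq_abs, Real.norm_eq_abs, sq, mul_assoc]
  exact mul_le_of_le_one_right (abs_nonneg _) (abs_vfam'_mul_abs_sin_le_one ε x)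

section

variable {ε : ℝ}

lemma vfam_mem_Icc (h0 : 0 < ε) (h1 : ε < 1) (x : ℝ) : vfam ε x ∈ Icc 0 (-log ε) := by
  have hε2 : 0 < ε ^ 2 := by positivity
  have hlog : 0 ≤ -log ε := neg_nonneg.mpr (log_nonpos h0.le h1.le)
  unfold vfam
  split_ifs with hx₁ hx₂ hx₃ hx₄
  · exact ⟨le_rfl, hlog⟩
  · refine ⟨log_nonneg ((one_le_div hε2).mpr (not_le.mp hx₁).le), ?_⟩
    rw [← log_div_sq_self]
    exact log_le_log (div_pos (hε2.trans (not_le.mp hx₁)) hε2) (by gcongr)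
  · rw [one_div, log_inv]
    exact ⟨hlog, le_rfl⟩
  · refine ⟨log_nonneg ((one_le_div hε2).mpr (by linarith)), ?_⟩
    rw [← log_div_sq_self]
    exact log_le_log (div_pos (by linarith) hε2) (by gcongr; linarith [not_le.mp hx₃])
  · exact ⟨le_rfl, hlog⟩

lemma vfam_eq_of_mem_Icc (h0 : 0 < ε) (h1 : ε < 1) {x : ℝ} (hx : x ∈ Icc ε (π - ε)) :
    vfam ε x = -log ε := by
  have hε2 : ε ^ 2 < ε := by nlinarith
  unfold vfam
  split_ifs with hx₁ hx₂ hx₃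
  · linarith [hx.1]
  · rw [le_antisymm hx₂ hx.1, log_div_sq_self]
  · rw [one_div, log_inv]
  all_goals linarith [hx.2]

lemma intervalIntegrable_vfam_mul_sin (h0 : 0 < ε) (h1 : ε < 1) (a b : ℝ) :
    IntervalIntegrable (fun x => vfam ε x * sin x) volume a b := by
  refine (intervalIntegrable_const (c := -log ε)).mono_fun'
    ((measurable_vfam ε).mul measurable_sin).aestronglyMeasurable (ae_of_all _ fun x => ?_)
  have hv := vfam_mem_Icc h0 h1 x
  show ‖vfam ε x * sin x‖ ≤ -log ε
  rw [norm_mul, Real.norm_of_nonneg hv.1]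
  exact (mul_le_of_le_one_right hv.1 (abs_sin_le_one x)).trans hv.2

lemma neg_log_le_integral_vfam_mul_sin (h0 : 0 < ε) (h1 : ε < 1) :
    -log ε ≤ ∫ x in (0:ℝ)..π, vfam ε x * sin x := by
  have hπ : 2 * ε ≤ π := by linarith [pi_gt_three]
  calc -log ε ≤ -log ε * (2 * cos ε) :=
        le_mul_of_one_le_right (neg_nonneg.mpr (log_nonpos h0.le h1.le)) (one_le_two_mul_cos (by nlinarith))
    _ = ∫ x in ε..π - ε, vfam ε x * sin x := by
        rw [integral_congr fun x hx => by
          rw [vfam_eq_of_mem_Icc h0 h1 (uIcc_of_le (by linarith : ε ≤ π - ε) ▸ hx)],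
          intervalIntegral.integral_const_mul, integral_sin, cos_pi_sub]
        ring
    _ ≤ ∫ x in (0:ℝ)..π, vfam ε x * sin x :=
        integral_mono_interval h0.le (by linarith) (by linarith)
          (ae_restrict_of_forall_mem measurableSet_Ioc fun x hx =>
            mul_nonneg (vfam_mem_Icc h0 h1 x).1 (sin_nonneg_of_nonneg_of_le_pi hx.1.le hx.2))
          (intervalIntegrable_vfam_mul_sin h0 h1 0 π)

lemma abs_vfam'_eq_indicator (h : 2 * ε ≤ π) (x : ℝ) :
    |vfam' ε x| = (Ioo (ε ^ 2) ε).indicator (·⁻¹) x + (Ioo (ε ^ 2) ε).indicator (·⁻¹) (π - x) := by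
  have hε2 := sq_nonneg ε
  have hmem : π - x ∈ Ioo (ε ^ 2) ε ↔ π - ε < x ∧ x < π - ε ^ 2 :=
    ⟨fun h' => ⟨by linarith [h'.2], by linarith [h'.1]⟩,
      fun h' => ⟨by linarith [h'.2], by linarith [h'.1]⟩⟩
  unfold vfam'
  by_cases h₁ : ε ^ 2 < x ∧ x < ε
  · have h₂ : π - x ∉ Ioo (ε ^ 2) ε := fun h' => by linarith [h'.2, h₁.2]
    rw [if_pos h₁, indicator_of_mem (show x ∈ Ioo (ε ^ 2) ε from h₁), indicator_of_notMem h₂,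
      abs_of_pos (one_div_pos.mpr (by linarith [h₁.1])), one_div, add_zero]
  rw [if_neg h₁, indicator_of_notMem (show x ∉ Ioo (ε ^ 2) ε from h₁), zero_add]
  by_cases h₂ : π - ε < x ∧ x < π - ε ^ 2
  · rw [if_pos h₂, indicator_of_mem (hmem.mpr h₂), abs_div, abs_one,
      abs_of_neg (by linarith [h₂.2]), neg_sub, one_div]
  · rw [if_neg h₂, indicator_of_notMem (mt hmem.mp h₂), abs_zero]

lemma intervalIntegrable_indicator_inv (h0 : 0 < ε) (a b : ℝ) :
    IntervalIntegrable ((Ioo (ε ^ 2) ε).indicator (·⁻¹)) volume a b :=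
  (intervalIntegrable_inv_iff.mpr (Or.inr (notMem_uIcc_of_lt (by positivity) h0))).indicator_Ioo a b

lemma intervalIntegrable_indicator_inv_pi_sub (h0 : 0 < ε) :
    IntervalIntegrable (fun x => (Ioo (ε ^ 2) ε).indicator (·⁻¹) (π - x)) volume 0 π := by
  simpa using (intervalIntegrable_indicator_inv h0 π 0).comp_sub_left π

lemma intervalIntegrable_abs_vfam' (h0 : 0 < ε) (h : 2 * ε ≤ π) :
    IntervalIntegrable (fun x => |vfam' ε x|) volume 0 π := by
  simp_rw [abs_vfam'_eq_indicator h]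
  exact (intervalIntegrable_indicator_inv h0 0 π).add (intervalIntegrable_indicator_inv_pi_sub h0)

lemma integral_abs_vfam' (h0 : 0 < ε) (h1 : ε < 1) :
    ∫ x in (0:ℝ)..π, |vfam' ε x| = 2 * -log ε := by
  have h : 2 * ε ≤ π := by linarith [pi_gt_three]
  simp_rw [abs_vfam'_eq_indicator h]
  rw [integral_add (intervalIntegrable_indicator_inv h0 0 π)
      (intervalIntegrable_indicator_inv_pi_sub h0),
    integral_comp_sub_left (fun x => (Ioo (ε ^ 2) ε).indicator (·⁻¹) x) π, sub_self, sub_zero,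
    intervalIntegral_indicator_Ioo (sq_nonneg ε) (by nlinarith) (by linarith),
    integral_inv_of_pos (by positivity) h0, log_div_sq_self]
  ring

lemma intervalIntegrable_sq_vfam'_mul_sin (h0 : 0 < ε) (h : 2 * ε ≤ π) :
    IntervalIntegrable (fun x => vfam' ε x ^ 2 * sin x) volume 0 π :=
  (intervalIntegrable_abs_vfam' h0 h).mono_fun'
    (((measurable_vfam' ε).pow_const 2).mul measurable_sin).aestronglyMeasurable
    (ae_of_all _ (norm_sq_vfam'_mul_sin_le ε))

lemma integral_sq_vfam'_mul_sin_le (h0 : 0 < ε) (h1 : ε < 1) :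
    ∫ x in (0:ℝ)..π, vfam' ε x ^ 2 * sin x ≤ 2 * -log ε :=
  (Real.le_norm_self _).trans <| (norm_integral_le_of_norm_le pi_pos.le
    (ae_of_all _ fun x _ => norm_sq_vfam'_mul_sin_le ε x)
    (intervalIntegrable_abs_vfam' h0 (by linarith [pi_gt_three]))).trans_eq
    (integral_abs_vfam' h0 h1)

lemma integral_sq_vfam'_mul_sin_pos (h0 : 0 < ε) (h1 : ε < 1) :
    0 < ∫ x in (0:ℝ)..π, vfam' ε x ^ 2 * sin x := by
  have h : 2 * ε ≤ π := by linarith [pi_gt_three]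
  have hε2 : ε ^ 2 < ε := by nlinarith
  have hint := intervalIntegrable_sq_vfam'_mul_sin h0 h
  calc 0 < ∫ x in ε ^ 2..ε, vfam' ε x ^ 2 * sin x := by
        refine intervalIntegral_pos_of_pos_on (hint.mono_set (uIcc_subset_uIcc ?_ ?_))
          (fun x hx => ?_) hε2
        · exact mem_uIcc_of_le (sq_nonneg ε) (by linarith)
        · exact mem_uIcc_of_le h0.le (by linarith)
        have hx0 : 0 < x := (sq_nonneg ε).trans_lt hx.1
        rw [vfam', if_pos (show ε ^ 2 < x ∧ x < ε from hx)]
        exact mul_pos (by positivity) (sin_pos_of_pos_of_lt_pi hx0 (by linarith [hx.2]))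
    _ ≤ ∫ x in (0:ℝ)..π, vfam' ε x ^ 2 * sin x :=
        integral_mono_interval (sq_nonneg ε) hε2.le (by linarith)
          (ae_restrict_of_forall_mem measurableSet_Ioc fun x hx =>
            mul_nonneg (sq_nonneg _) (sin_nonneg_of_nonneg_of_le_pi hx.1.le hx.2)) hint

lemma neg_log_div_two_le_ratio (h0 : 0 < ε) (h1 : ε < 1) :
    -log ε / 2 ≤ (∫ x in (0:ℝ)..π, vfam ε x * sin x) ^ 2
      / ∫ x in (0:ℝ)..π, vfam' ε x ^ 2 * sin x := by
  have hL : 0 ≤ -log ε := neg_nonneg.mpr (log_nonpos h0.le h1.le)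
  have hN := neg_log_le_integral_vfam_mul_sin h0 h1
  have hD := integral_sq_vfam'_mul_sin_le h0 h1
  rw [le_div_iff₀ (integral_sq_vfam'_mul_sin_pos h0 h1)]
  calc -log ε / 2 * ∫ x in (0:ℝ)..π, vfam' ε x ^ 2 * sin x
      ≤ -log ε / 2 * (2 * -log ε) := by gcongr
    _ = (-log ε) ^ 2 := by ring
    _ ≤ (∫ x in (0:ℝ)..π, vfam ε x * sin x) ^ 2 := by gcongr

end

/-- There is no constant `C > 0` for which the weighted Poincaré inequality with weight
`sin x` and exponent `p = 2` holds for all the `W₀^{1,2}((0,π))` functions `v_ε`;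
concretely, the ratio `(∫₀^π v_ε sin)² / ∫₀^π (v_ε')² sin` tends to `∞` as `ε → 0⁺`. -/
theorem stmt_2 :
    (¬ ∃ C > (0 : ℝ), ∀ ε ∈ Set.Ioo (0 : ℝ) (Real.pi / 4),
        C * (∫ x in (0:ℝ)..Real.pi, vfam ε x * Real.sin x) ^ 2
          ≤ ∫ x in (0:ℝ)..Real.pi, (vfam' ε x) ^ 2 * Real.sin x) ∧
    Tendsto (fun ε : ℝ =>
        (∫ x in (0:ℝ)..Real.pi, vfam ε x * Real.sin x) ^ 2
          / ∫ x in (0:ℝ)..Real.pi, (vfam' ε x) ^ 2 * Real.sin x)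
      (nhdsWithin 0 (Set.Ioi 0)) atTop := by
  have hsmall : ∀ᶠ ε in nhdsWithin 0 (Ioi 0), ε ∈ Ioo (0 : ℝ) (π / 4) :=
    Ioo_mem_nhdsGT (by positivity)
  have hlt_one : ∀ {ε : ℝ}, ε ∈ Ioo (0 : ℝ) (π / 4) → ε < 1 := fun hε => by
    linarith [hε.2, pi_lt_four]
  have htendsto : Tendsto (fun ε : ℝ =>
      (∫ x in (0:ℝ)..π, vfam ε x * sin x) ^ 2 / ∫ x in (0:ℝ)..π, (vfam' ε x) ^ 2 * sin x)
      (nhdsWithin 0 (Ioi 0)) atTop :=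
    tendsto_atTop_mono' _ (hsmall.mono fun ε hε => neg_log_div_two_le_ratio hε.1 (hlt_one hε))
      ((tendsto_neg_atBot_atTop.comp tendsto_log_nhdsGT_zero).atTop_div_const two_pos)
  refine ⟨fun ⟨C, hC, hineq⟩ => ?_, htendsto⟩
  obtain ⟨ε, hratio, hε⟩ := ((htendsto.eventually_gt_atTop C⁻¹).and hsmall).exists
  rw [lt_div_iff₀ (integral_sq_vfam'_mul_sin_pos hε.1 (hlt_one hε)), inv_mul_lt_iff₀ hC] at hratio
  exact (hineq ε hε).not_gt hratio
end

section
/- Let u : [0,π] × [0,T) → ℝ be a C² solution of u_t = u_xx + (u_x)^p (p > 2 a real number) with u(0,t) = u(π,t) = 0, and set z(t) = ∫₀^π u(x,t) sin(x) dx. Then z satisfies the differential inequality z'(t) + z(t) ≥ C·z(t)^p whenever z(t) ≥ 0, where C > 0 is the constant of the weighted Poincaré inequality with weight sin(x). -/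
/-!
Multiply the equation by the first Dirichlet eigenfunction `sin x` and integrate over `(0, π)`.
Two integrations by parts, whose boundary terms vanish because both `u` and `sin` vanish at
`0` and `π`, turn `∫ u_xx sin` into `-z`, so `z' + z = ∫ |u_x|^p sin x`; the weighted Poincaré
inequality bounds the right-hand side below by `C z^p`.
-/

open MeasureTheory Real intervalIntegral

theorem hasDerivAt_intervalIntegral_of_continuous_partial {E : Type*} [NormedAddCommGroup E]
    [NormedSpace ℝ E] {f f' : ℝ → ℝ → E} (hf : Continuous (Function.uncurry f))
    (hf' : Continuous (Function.uncurry f')) (hderiv : ∀ x s, HasDerivAt (f x) (f' x s) s)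
    (a b t : ℝ) :
    HasDerivAt (fun s => ∫ x in a..b, f x s) (∫ x in a..b, f' x t) t := by
  obtain ⟨M, hM⟩ :=
    (isCompact_uIcc.prod (isCompact_closedBall t 1)).exists_bound_of_continuousOn
      hf'.continuousOn
  have hcont : ∀ s, Continuous fun x => f x s := fun s => hf.comp (.prodMk_left s)
  refine (hasDerivAt_integral_of_dominated_loc_of_deriv_le (bound := fun _ => M)
    (Metric.ball_mem_nhds t one_pos) (.of_forall fun s => (hcont s).aestronglyMeasurable)
    ((hcont t).intervalIntegrable a b) (hf'.comp (.prodMk_left t)).aestronglyMeasurable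
    (ae_of_all _ fun x hx s hs =>
      hM (x, s) ⟨Set.uIoc_subset_uIcc hx, Metric.ball_subset_closedBall hs⟩)
    intervalIntegrable_const (ae_of_all _ fun x _ s _ => hderiv x s)).2

section PartialDerivative

variable {u : ℝ → ℝ → ℝ}

theorem hasDerivAt_partial_snd (hu : Differentiable ℝ (Function.uncurry u)) (x s : ℝ) :
    HasDerivAt (fun r => u x r) (fderiv ℝ (Function.uncurry u) (x, s) (0, 1)) s :=
  (hu (x, s)).hasFDerivAt.comp_hasDerivAt s ((hasDerivAt_const s x).prodMk (hasDerivAt_id s))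

theorem continuous_partial_snd (hu : ContDiff ℝ 1 (Function.uncurry u)) :
    Continuous (Function.uncurry fun x s => deriv (fun r => u x r) s) := by
  have hpartial : (Function.uncurry fun x s => deriv (fun r => u x r) s)
      = fun q => fderiv ℝ (Function.uncurry u) q (0, 1) :=
    funext fun q => (hasDerivAt_partial_snd (hu.differentiable one_ne_zero) q.1 q.2).deriv
  rw [hpartial]
  exact (hu.continuous_fderiv one_ne_zero).clm_apply continuous_const

theorem hasDerivAt_integral_mul_of_contDiff (hu : ContDiff ℝ 1 (Function.uncurry u))
    {w : ℝ → ℝ} (hw : Continuous w) (a b t : ℝ) :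
    HasDerivAt (fun s => ∫ x in a..b, u x s * w x)
      (∫ x in a..b, deriv (fun r => u x r) t * w x) t := by
  have hw' : Continuous fun q : ℝ × ℝ => w q.1 := hw.comp continuous_fst
  exact hasDerivAt_intervalIntegral_of_continuous_partial
    (f := fun x s => u x s * w x) (f' := fun x s => deriv (fun r => u x r) s * w x)
    (hu.continuous.mul hw') ((continuous_partial_snd hu).mul hw')
    (fun x s => (hasDerivAt_partial_snd (hu.differentiable one_ne_zero) x s).differentiableAt
      |>.hasDerivAt.mul_const (w x))
    a b t

end PartialDerivative

section IntegrationByParts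

variable {a b : ℝ} {f g : ℝ → ℝ}

theorem integral_deriv_mul_eq_neg_mul_deriv_of_eq_zero (hf : ContDiff ℝ 1 f)
    (hg : ContDiff ℝ 1 g) (ha : g a = 0) (hb : g b = 0) :
    ∫ x in a..b, deriv f x * g x = -∫ x in a..b, f x * deriv g x := by
  have hibp := integral_mul_deriv_eq_deriv_mul
    (fun x _ => (hg.differentiable one_ne_zero x).hasDerivAt)
    (fun x _ => (hf.differentiable one_ne_zero x).hasDerivAt)
    ((hg.continuous_deriv le_rfl).intervalIntegrable a b)
    ((hf.continuous_deriv le_rfl).intervalIntegrable a b)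
  simp only [ha, hb, zero_mul, sub_zero, zero_sub] at hibp
  simpa only [mul_comm] using hibp

theorem integral_deriv_deriv_mul_eq_mul_deriv_deriv (hf : ContDiff ℝ 2 f) (hg : ContDiff ℝ 2 g)
    (hfa : f a = 0) (hfb : f b = 0) (hga : g a = 0) (hgb : g b = 0) :
    ∫ x in a..b, deriv (deriv f) x * g x = ∫ x in a..b, f x * deriv (deriv g) x := by
  have hf' : ContDiff ℝ 1 (deriv f) := hf.iterate_deriv' 1 1
  have hg' : ContDiff ℝ 1 (deriv g) := hg.iterate_deriv' 1 1
  rw [integral_deriv_mul_eq_neg_mul_deriv_of_eq_zero hf' (hg.of_le one_le_two) hga hgb]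
  simp only [mul_comm (f _),
    integral_deriv_mul_eq_neg_mul_deriv_of_eq_zero hg' (hf.of_le one_le_two) hfa hfb,
    mul_comm (deriv g _)]

end IntegrationByParts

theorem integral_deriv_deriv_mul_sin {v : ℝ → ℝ} (hv : ContDiff ℝ 2 v) (h0 : v 0 = 0)
    (hπ : v π = 0) :
    ∫ x in (0:ℝ)..π, deriv (deriv v) x * sin x = -∫ x in (0:ℝ)..π, v x * sin x := by
  have hsin'' : deriv (deriv sin) = fun x => -sin x := by rw [Real.deriv_sin, Real.deriv_cos']
  rw [integral_deriv_deriv_mul_eq_mul_deriv_deriv hv contDiff_sin h0 hπ sin_zero sin_pi, hsin'']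
  simp only [mul_neg, intervalIntegral.integral_neg]

theorem stmt_5_general (p : ℝ) (T : ℝ) (u : ℝ → ℝ → ℝ)
    (hu : ContDiff ℝ 2 (Function.uncurry u))
    (hPDE : ∀ x ∈ Set.Icc (0 : ℝ) Real.pi, ∀ t ∈ Set.Ico (0 : ℝ) T,
      deriv (fun s => u x s) t
        = deriv (deriv (fun y => u y t)) x + |deriv (fun y => u y t) x| ^ p)
    (hBC : ∀ t ∈ Set.Ico (0 : ℝ) T, u 0 t = 0 ∧ u Real.pi t = 0)
    (C : ℝ)
    (hPoin : ∀ v : ℝ → ℝ, ContDiffOn ℝ 1 v (Set.Icc 0 Real.pi) →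
      v 0 = 0 → v Real.pi = 0 →
      C * |∫ x in (0:ℝ)..Real.pi, v x * Real.sin x| ^ p
        ≤ ∫ x in (0:ℝ)..Real.pi, |derivWithin v (Set.Icc 0 Real.pi) x| ^ p * Real.sin x) :
    ∀ t ∈ Set.Ico (0 : ℝ) T,
      0 ≤ ∫ x in (0:ℝ)..Real.pi, u x t * Real.sin x →
      C * (∫ x in (0:ℝ)..Real.pi, u x t * Real.sin x) ^ p
        ≤ deriv (fun s => ∫ x in (0:ℝ)..Real.pi, u x s * Real.sin x) t
          + ∫ x in (0:ℝ)..Real.pi, u x t * Real.sin x := by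
  intro t ht hz
  set v := fun y => u y t
  have hv : ContDiff ℝ 2 v := hu.comp (contDiff_id.prodMk contDiff_const)
  have hu₁ : ContDiff ℝ 1 (Function.uncurry u) := hu.of_le one_le_two
  have hz_deriv_add :
      deriv (fun s => ∫ x in (0:ℝ)..π, u x s * sin x) t + ∫ x in (0:ℝ)..π, v x * sin x
        = ∫ x in (0:ℝ)..π, |deriv v x| ^ p * sin x := by
    -- `|u_x|^p` is only ever integrated as `u_t - u_xx`, whose integrability is free.
    have hut : IntervalIntegrable (fun x => deriv (fun r => u x r) t * sin x) volume 0 π :=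
      (((continuous_partial_snd hu₁).comp (.prodMk_left t)).mul continuous_sin).intervalIntegrable
        _ _
    have hvxx : IntervalIntegrable (fun x => deriv (deriv v) x * sin x) volume 0 π :=
      ((hv.iterate_deriv' 0 2).continuous.mul continuous_sin).intervalIntegrable _ _
    rw [(hasDerivAt_integral_mul_of_contDiff hu₁ continuous_sin 0 π t).deriv, ← sub_neg_eq_add,
      ← integral_deriv_deriv_mul_sin hv (hBC t ht).1 (hBC t ht).2, ← integral_sub hut hvxx]
    refine integral_congr fun x hx => ?_
    rw [Set.uIcc_of_le pi_pos.le] at hx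
    simp only [hPDE x hx t ht, v]
    ring
  have hpoincare : C * |∫ x in (0:ℝ)..π, v x * sin x| ^ p
      ≤ ∫ x in (0:ℝ)..π, |deriv v x| ^ p * sin x := by
    refine (hPoin v (hv.of_le one_le_two).contDiffOn (hBC t ht).1 (hBC t ht).2).trans_eq
      (integral_congr fun x hx => ?_)
    rw [Set.uIcc_of_le pi_pos.le] at hx
    simp only [((hv.differentiable two_ne_zero) x).derivWithin (uniqueDiffOn_Icc pi_pos x hx)]
  rw [abs_of_nonneg hz] at hpoincare
  exact hpoincare.trans_eq hz_deriv_add.symm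

/-- If `u` is a `C²` solution of `u_t = u_xx + |u_x|^p` (`p > 2`) on `[0,π] × [0,T)` with
homogeneous Dirichlet boundary conditions, and `z(t) = ∫₀^π u(x,t) sin x dx`, then
`z'(t) + z(t) ≥ C z(t)^p` whenever `z(t) ≥ 0`, where `C > 0` is the constant of the
weighted Poincaré inequality with weight `sin x`. -/
theorem stmt_5 (p : ℝ) (hp : 2 < p) (T : ℝ) (hT : 0 < T) (u : ℝ → ℝ → ℝ)
    (hu : ContDiff ℝ 2 (Function.uncurry u))
    (hPDE : ∀ x ∈ Set.Icc (0 : ℝ) Real.pi, ∀ t ∈ Set.Ico (0 : ℝ) T,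
      deriv (fun s => u x s) t
        = deriv (deriv (fun y => u y t)) x + |deriv (fun y => u y t) x| ^ p)
    (hBC : ∀ t ∈ Set.Ico (0 : ℝ) T, u 0 t = 0 ∧ u Real.pi t = 0)
    (C : ℝ) (hC : 0 < C)
    (hPoin : ∀ v : ℝ → ℝ, ContDiffOn ℝ 1 v (Set.Icc 0 Real.pi) →
      v 0 = 0 → v Real.pi = 0 →
      C * |∫ x in (0:ℝ)..Real.pi, v x * Real.sin x| ^ p
        ≤ ∫ x in (0:ℝ)..Real.pi, |derivWithin v (Set.Icc 0 Real.pi) x| ^ p * Real.sin x) :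
    ∀ t ∈ Set.Ico (0 : ℝ) T,
      0 ≤ ∫ x in (0:ℝ)..Real.pi, u x t * Real.sin x →
      C * (∫ x in (0:ℝ)..Real.pi, u x t * Real.sin x) ^ p
        ≤ deriv (fun s => ∫ x in (0:ℝ)..Real.pi, u x s * Real.sin x) t
          + ∫ x in (0:ℝ)..Real.pi, u x t * Real.sin x :=
  stmt_5_general p T u hu hPDE hBC C hPoin
end

section
/- Let ν > 0 and let ω : [0,π] × [0,T*) → ℝ be a smooth solution of ω_t = ν ω_xx − ω² with ω(0,t) = ω(π,t) = 0. Set y(t) = ∫₀^π ω(x,t) sin(x) dx. Then y'(t) ≤ ν² − (1/4) y(t)². -/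
open Real MeasureTheory intervalIntegral

/-- For a smooth solution of `ω_t = ν ω_xx − ω²` on `[0,π]` with homogeneous Dirichlet
boundary conditions, the quantity `y(t) = ∫₀^π ω(x,t) sin x dx` satisfies
`y'(t) ≤ ν² − (1/4) y(t)²`. -/
theorem stmt_16 (ν T : ℝ) (hν : 0 < ν) (ω : ℝ → ℝ → ℝ)
    (hsm : ContDiff ℝ (⊤ : ℕ∞) (Function.uncurry ω))
    (hPDE : ∀ x ∈ Set.Icc (0 : ℝ) Real.pi, ∀ t ∈ Set.Ico (0 : ℝ) T,
      deriv (fun s => ω x s) t = ν * deriv^[2] (fun y => ω y t) x - (ω x t) ^ 2)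
    (hBC : ∀ t ∈ Set.Ico (0 : ℝ) T, ω 0 t = 0 ∧ ω Real.pi t = 0) :
    ∀ t ∈ Set.Ico (0 : ℝ) T,
      deriv (fun s => ∫ x in (0:ℝ)..Real.pi, ω x s * Real.sin x) t
        ≤ ν ^ 2 - 1 / 4 * (∫ x in (0:ℝ)..Real.pi, ω x t * Real.sin x) ^ 2 := by
  intro t ht
  have hsm' : ContDiff ℝ ((⊤ : ℕ∞) : WithTop ℕ∞) (Function.uncurry ω) := hsm.of_le (by simp)
  have hc : Continuous (Function.uncurry ω) := hsm'.continuous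
  have hfd : Differentiable ℝ (Function.uncurry ω) :=
    hsm'.differentiable (by norm_num)
  -- partial t-derivative
  set D : ℝ → ℝ → ℝ := fun x s => fderiv ℝ (Function.uncurry ω) (x, s) (0, 1) with hD
  have hDt : ∀ x s : ℝ, HasDerivAt (fun u => ω x u) (D x s) s := by
    intro x s
    have h1 : HasDerivAt (fun u : ℝ => (x, u)) ((0 : ℝ), (1 : ℝ)) s :=
      (hasDerivAt_const s x).prodMk (hasDerivAt_id s)
    exact ((hfd (x, s)).hasFDerivAt).comp_hasDerivAt s h1
  have hDcont : Continuous (fun p : ℝ × ℝ => D p.1 p.2) := by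
    have h := hsm'.continuous_fderiv (by norm_num)
    exact h.clm_apply continuous_const
  -- slice smoothness in x
  have hx : ∀ s : ℝ, ContDiff ℝ ((⊤ : ℕ∞) : WithTop ℕ∞) (fun y => ω y s) := fun s =>
    hsm'.comp (contDiff_id.prodMk contDiff_const)
  -- differentiation under the integral sign
  obtain ⟨C, hC⟩ : ∃ C, ∀ p ∈ (Set.Icc (0:ℝ) π ×ˢ Set.Icc (t-1) (t+1)), ‖D p.1 p.2‖ ≤ C :=
    (isCompact_Icc.prod isCompact_Icc).exists_bound_of_continuousOn hDcont.continuousOn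
  -- differentiation under the integral sign
  have key : HasDerivAt (fun s => ∫ x in (0:ℝ)..π, ω x s * Real.sin x)
      (∫ x in (0:ℝ)..π, D x t * Real.sin x) t := by
    have hmeas : ∀ᶠ s in nhds t, AEStronglyMeasurable (fun x => ω x s * Real.sin x)
        (volume.restrict (Set.uIoc (0:ℝ) π)) := by
      filter_upwards with s
      exact ((hc.comp (continuous_id.prodMk continuous_const)).mul
        Real.continuous_sin).aestronglyMeasurable
    have hint : IntervalIntegrable (fun x => ω x t * Real.sin x) volume 0 π :=
      ((hc.comp (continuous_id.prodMk continuous_const)).mul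
        Real.continuous_sin).intervalIntegrable _ _
    have hmeas' : AEStronglyMeasurable (fun x => D x t * Real.sin x)
        (volume.restrict (Set.uIoc (0:ℝ) π)) := by
      exact ((hDcont.comp (continuous_id.prodMk continuous_const)).mul
        Real.continuous_sin).aestronglyMeasurable
    have hbound : ∀ᵐ x ∂volume, x ∈ Set.uIoc (0:ℝ) π →
        ∀ s ∈ Metric.ball t 1, ‖D x s * Real.sin x‖ ≤ C := by
      filter_upwards with x hx s hs
      have hx' : x ∈ Set.Icc (0:ℝ) π := by
        rw [Set.uIoc_of_le Real.pi_nonneg] at hx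
        exact ⟨le_of_lt hx.1, hx.2⟩
      have hs' : s ∈ Set.Icc (t-1) (t+1) := by
        rw [Metric.mem_ball, Real.dist_eq, abs_lt] at hs
        constructor <;> linarith [hs.1, hs.2]
      have h1 : ‖D x s‖ ≤ C := hC (x, s) ⟨hx', hs'⟩
      calc ‖D x s * Real.sin x‖ = ‖D x s‖ * ‖Real.sin x‖ := norm_mul _ _
        _ ≤ C * 1 := by
            apply mul_le_mul h1 _ (norm_nonneg _) ((norm_nonneg _).trans h1)
            rw [Real.norm_eq_abs]; exact Real.abs_sin_le_one x
        _ = C := mul_one C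
    have hdiff : ∀ᵐ x ∂volume, x ∈ Set.uIoc (0:ℝ) π →
        ∀ s ∈ Metric.ball t 1, HasDerivAt (fun s => ω x s * Real.sin x)
          (D x s * Real.sin x) s := by
      filter_upwards with x _ s _
      exact (hDt x s).mul_const _
    exact (intervalIntegral.hasDerivAt_integral_of_dominated_loc_of_deriv_le
      (F := fun s x => ω x s * Real.sin x) (F' := fun s x => D x s * Real.sin x)
      (bound := fun _ => C) (Metric.ball_mem_nhds t one_pos) hmeas hint hmeas' hbound
      intervalIntegrable_const hdiff).2
  -- notation
  set g : ℝ → ℝ := fun y => ω y t with hg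
  set y : ℝ := ∫ x in (0:ℝ)..π, ω x t * Real.sin x with hy
  have hgC : ContDiff ℝ ((⊤ : ℕ∞) : WithTop ℕ∞) g := hx t
  have hg'C : ContDiff ℝ ((⊤ : ℕ∞) : WithTop ℕ∞) (deriv g) := by
    have := hgC.iterate_deriv 1
    simpa using this
  have hg''C : Continuous (fun x => deriv^[2] g x) := (hgC.iterate_deriv 2).continuous
  have hder2 : ∀ x, deriv^[2] g x = deriv (deriv g) x := by
    intro x; simp [Function.iterate_succ_apply']
  -- rewrite the integrand of the derivative using the PDE
  have hDeq : ∀ x ∈ Set.uIcc (0:ℝ) π,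
      D x t * Real.sin x = (ν * deriv^[2] g x - g x ^ 2) * Real.sin x := by
    intro x hxmem
    have hx' : x ∈ Set.Icc (0:ℝ) π := by
      rwa [Set.uIcc_of_le Real.pi_nonneg] at hxmem
    have h1 : D x t = deriv (fun s => ω x s) t := ((hDt x t).deriv).symm
    rw [h1, hPDE x hx' t ht]
  have hIeq : (∫ x in (0:ℝ)..π, D x t * Real.sin x)
      = ∫ x in (0:ℝ)..π, (ν * deriv^[2] g x - g x ^ 2) * Real.sin x :=
    intervalIntegral.integral_congr hDeq
  -- continuity helpers
  have hgcont : Continuous g := hgC.continuous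
  have hint1 : IntervalIntegrable (fun x => deriv^[2] g x * Real.sin x) volume 0 π :=
    (hg''C.mul Real.continuous_sin).intervalIntegrable _ _
  have hint2 : IntervalIntegrable (fun x => g x ^ 2 * Real.sin x) volume 0 π :=
    (((hgcont.pow 2)).mul Real.continuous_sin).intervalIntegrable _ _
  -- integration by parts twice
  have ibp2 : (∫ x in (0:ℝ)..π, Real.cos x * deriv g x)
      = Real.cos π * g π - Real.cos 0 * g 0 - ∫ x in (0:ℝ)..π, (-Real.sin x) * g x := by
    apply intervalIntegral.integral_mul_deriv_eq_deriv_mul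
    · intro x _; simpa using (Real.hasDerivAt_cos x)
    · intro x _
      exact (hgC.differentiable (by norm_num) x).hasDerivAt
    · exact ((Real.continuous_sin.neg).intervalIntegrable _ _)
    · exact ((hg'C.continuous).intervalIntegrable _ _)
  have ibp1 : (∫ x in (0:ℝ)..π, Real.sin x * deriv (deriv g) x)
      = Real.sin π * deriv g π - Real.sin 0 * deriv g 0
        - ∫ x in (0:ℝ)..π, Real.cos x * deriv g x := by
    apply intervalIntegral.integral_mul_deriv_eq_deriv_mul
    · intro x _; exact Real.hasDerivAt_sin x
    · intro x _
      exact (hg'C.differentiable (by norm_num) x).hasDerivAt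
    · exact (Real.continuous_cos.intervalIntegrable _ _)
    · have : Continuous (deriv (deriv g)) := by
        have := hgC.iterate_deriv 2
        simp only [Function.iterate_succ, Function.iterate_zero, Function.comp] at this
        exact this.continuous
      exact (this.intervalIntegrable _ _)
  have hBC0 : g 0 = 0 := (hBC t ht).1
  have hBCπ : g π = 0 := (hBC t ht).2
  have hibp : (∫ x in (0:ℝ)..π, deriv^[2] g x * Real.sin x) = -y := by
    have e1 : (∫ x in (0:ℝ)..π, deriv^[2] g x * Real.sin x)
        = ∫ x in (0:ℝ)..π, Real.sin x * deriv (deriv g) x := by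
      apply intervalIntegral.integral_congr
      intro x _
      show deriv^[2] g x * Real.sin x = Real.sin x * deriv (deriv g) x
      rw [hder2 x, mul_comm]
    rw [e1, ibp1, ibp2]
    simp only [Real.sin_pi, Real.sin_zero, Real.cos_pi, Real.cos_zero, hBC0, hBCπ]
    have e2 : (∫ x in (0:ℝ)..π, (-Real.sin x) * g x) = -y := by
      have e3 : (∫ x in (0:ℝ)..π, (-Real.sin x) * g x)
          = -∫ x in (0:ℝ)..π, g x * Real.sin x := by
        rw [← intervalIntegral.integral_neg]
        apply intervalIntegral.integral_congr
        intro x _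
        show (-Real.sin x) * g x = -(g x * Real.sin x)
        ring
      have hgy : (∫ x in (0:ℝ)..π, g x * Real.sin x) = y := rfl
      rw [e3, hgy]
    rw [e2]; ring
  -- the derivative value
  have hI : (∫ x in (0:ℝ)..π, D x t * Real.sin x)
      = -ν * y - ∫ x in (0:ℝ)..π, g x ^ 2 * Real.sin x := by
    rw [hIeq]
    have split : (∫ x in (0:ℝ)..π, (ν * deriv^[2] g x - g x ^ 2) * Real.sin x)
        = ν * (∫ x in (0:ℝ)..π, deriv^[2] g x * Real.sin x)
          - ∫ x in (0:ℝ)..π, g x ^ 2 * Real.sin x := by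
      rw [← intervalIntegral.integral_const_mul, ← intervalIntegral.integral_sub
        (hint1.const_mul ν) hint2]
      apply intervalIntegral.integral_congr
      intro x _; ring
    rw [split, hibp]; ring
  -- Cauchy-Schwarz: ∫ ω² sin ≥ y²/2
  have hCS : y ^ 2 / 2 ≤ ∫ x in (0:ℝ)..π, g x ^ 2 * Real.sin x := by
    have hnn : 0 ≤ ∫ x in (0:ℝ)..π, (g x - y / 2) ^ 2 * Real.sin x := by
      apply intervalIntegral.integral_nonneg Real.pi_nonneg
      intro u hu
      exact mul_nonneg (sq_nonneg _) (Real.sin_nonneg_of_nonneg_of_le_pi hu.1 hu.2)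
    have hsin2 : (∫ x in (0:ℝ)..π, Real.sin x) = 2 := by
      rw [integral_sin]; norm_num
    have hexp : (∫ x in (0:ℝ)..π, (g x - y / 2) ^ 2 * Real.sin x)
        = (∫ x in (0:ℝ)..π, g x ^ 2 * Real.sin x) - y * y + y ^ 2 / 4 * 2 := by
      have e : ∀ x, (g x - y / 2) ^ 2 * Real.sin x
          = g x ^ 2 * Real.sin x - y * (g x * Real.sin x) + y ^ 2 / 4 * Real.sin x := by
        intro x; ring
      rw [intervalIntegral.integral_congr (fun x _ => e x)]
      have hintb : IntervalIntegrable (fun x => y * (g x * Real.sin x)) volume 0 π :=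
        ((hgcont.mul Real.continuous_sin).intervalIntegrable _ _).const_mul y
      have hintc : IntervalIntegrable (fun x => y ^ 2 / 4 * Real.sin x) volume 0 π :=
        (Real.continuous_sin.intervalIntegrable _ _).const_mul _
      rw [intervalIntegral.integral_add (hint2.sub hintb) hintc,
        intervalIntegral.integral_sub hint2 hintb,
        intervalIntegral.integral_const_mul, intervalIntegral.integral_const_mul, hsin2]
    nlinarith [hnn, hexp]
  -- conclude
  rw [key.deriv, hI]
  nlinarith [hCS, sq_nonneg (ν + y / 2)]
end
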